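/- arXiv:2309.11074 — 4 statements merged into one kernel-verified Lean document; each statement's English description precedes it below -/
import Mathlib

section
/- The 2×2 real matrix T = [[-1, 2], [0, -1]] is Cesàro bounded but not power bounded (with respect to the operator norm on 2×2 matrices). -/
/-!
Write `T = -1 + x` with `x * x = 0`. Then `T ^ n = (-1) ^ n * (1 - n • x)`, so `‖T ^ n‖` grows
linearly in `n` as soon as `x ≠ 0`: `T` is not power bounded. On the other hand `1 - T = 2 - x` is
invertible, so the geometric sum `∑_{k<n} T ^ k = (1 - T)⁻¹ * (1 - T ^ n)` is also `O(n)`, and its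
Cesàro means stay bounded. For the given matrix, `x = [[0, 2], [0, 0]]`.
-/

open Finset

section PowerBounded

variable {A : Type*} [NormedRing A]

def IsPowerBounded (a : A) : Prop :=
  ∃ C : ℝ, ∀ n : ℕ, ‖a ^ n‖ ≤ C

def IsCesaroBounded [NormedAlgebra ℝ A] (a : A) : Prop :=
  ∃ C : ℝ, ∀ n : ℕ, ‖(n : ℝ)⁻¹ • ∑ k ∈ range n, a ^ k‖ ≤ C

theorem IsCesaroBounded.of_isUnit_one_sub [NormedAlgebra ℝ A] {a : A} (ha : IsUnit (1 - a))
    {C : ℝ} (hC : ∀ n : ℕ, ‖a ^ n‖ ≤ C * (n + 1)) : IsCesaroBounded a := by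
  obtain ⟨u, hu⟩ := ha
  have hC0 : 0 ≤ C := by simpa using (norm_nonneg _).trans (hC 0)
  refine ⟨‖(↑u⁻¹ : A)‖ * C * 3, fun n => ?_⟩
  rcases Nat.eq_zero_or_pos n with rfl | hn
  · simp only [range_zero, sum_empty, smul_zero, norm_zero]
    positivity
  have hsum : ∑ k ∈ range n, a ^ k = ↑u⁻¹ * (1 - a ^ n) := by
    rw [← mul_neg_geom_sum, ← hu, Units.inv_mul_cancel_left]
  have hn' : (1 : ℝ) ≤ n := by exact_mod_cast hn
  calc ‖(n : ℝ)⁻¹ • ∑ k ∈ range n, a ^ k‖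
      ≤ (n : ℝ)⁻¹ * (‖(↑u⁻¹ : A)‖ * (‖(1 : A)‖ + ‖a ^ n‖)) := by
        rw [norm_smul, norm_inv, Real.norm_natCast, hsum]
        gcongr
        exact (norm_mul_le _ _).trans (by gcongr; exact norm_sub_le _ _)
    _ ≤ (n : ℝ)⁻¹ * (‖(↑u⁻¹ : A)‖ * (C + C * (n + 1))) := by
        gcongr
        · simpa using hC 0
        · exact hC n
    _ = ‖(↑u⁻¹ : A)‖ * C * ((n + 2) / n) := by
        field_simp
        ring
    _ ≤ ‖(↑u⁻¹ : A)‖ * C * 3 := by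
        gcongr
        rw [div_le_iff₀ (by positivity)]
        linarith

end PowerBounded

section SquareZero

variable {R : Type*} [Ring R]

theorem one_sub_pow_of_mul_self_eq_zero {x : R} (hx : x * x = 0) (n : ℕ) :
    (1 - x) ^ n = 1 - n • x := by
  induction n with
  | zero => simp
  | succ n ih =>
    rw [pow_succ, ih, sub_mul, one_mul, mul_sub, mul_one, smul_mul_assoc, hx, smul_zero, succ_nsmul]
    abel

theorem neg_one_add_pow_of_mul_self_eq_zero {x : R} (hx : x * x = 0) (n : ℕ) :
    (-1 + x) ^ n = (-1) ^ n * (1 - n • x) := by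
  rw [← one_sub_pow_of_mul_self_eq_zero hx, ← neg_pow, neg_sub', sub_neg_eq_add, add_comm]

variable {A : Type*} [NormedRing A]

theorem norm_neg_one_add_pow_of_mul_self_eq_zero {x : A} (hx : x * x = 0) (n : ℕ) :
    ‖(-1 + x) ^ n‖ = ‖1 - n • x‖ := by
  rw [neg_one_add_pow_of_mul_self_eq_zero hx]
  rcases neg_one_pow_eq_or A n with h | h <;> simp only [h, one_mul, neg_one_mul, norm_neg]

variable [NormedAlgebra ℝ A]

theorem not_isPowerBounded_neg_one_add {x : A} (hx : x * x = 0) (hx0 : x ≠ 0) :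
    ¬ IsPowerBounded (-1 + x) := by
  rintro ⟨C, hC⟩
  obtain ⟨n, hn⟩ := exists_nat_gt ((C + ‖(1 : A)‖) / ‖x‖)
  have hlower : n * ‖x‖ - ‖(1 : A)‖ ≤ ‖(-1 + x) ^ n‖ := by
    rw [norm_neg_one_add_pow_of_mul_self_eq_zero hx, ← nsmul_eq_mul, ← RCLike.norm_nsmul ℝ, norm_sub_rev]
    exact norm_sub_norm_le _ _
  rw [div_lt_iff₀ (norm_pos_iff.2 hx0)] at hn
  linarith [hC n]

theorem isCesaroBounded_neg_one_add {x : A} (hx : x * x = 0) : IsCesaroBounded (-1 + x) := by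
  have hunit : IsUnit (1 - (-1 + x)) := by
    have h2 : IsUnit (2 : A) := by
      simpa only [map_ofNat] using (isUnit_iff_ne_zero.2 (two_ne_zero' ℝ)).map (algebraMap ℝ A)
    have hnil : IsNilpotent (-x) := ⟨2, by rw [neg_sq, sq, hx]⟩
    convert hnil.isUnit_add_left_of_commute h2 (Commute.ofNat_right _ 2) using 1
    rw [← one_add_one_eq_two]
    abel
  refine .of_isUnit_one_sub hunit (C := ‖(1 : A)‖ + ‖x‖) fun n => ?_
  rw [norm_neg_one_add_pow_of_mul_self_eq_zero hx]
  calc ‖1 - n • x‖ ≤ ‖(1 : A)‖ + n * ‖x‖ := by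
        rw [← nsmul_eq_mul, ← RCLike.norm_nsmul ℝ]
        exact norm_sub_le _ _
    _ ≤ (‖(1 : A)‖ + ‖x‖) * (n + 1) := by
        nlinarith [norm_nonneg (1 : A), norm_nonneg x, (n.cast_nonneg : (0 : ℝ) ≤ n)]

end SquareZero

/-- The Assani matrix `[[-1, 2], [0, -1]]`, viewed as an operator on Euclidean `ℝ²`,
is Cesàro bounded but not power bounded (operator norm). -/
theorem stmt_2 :
    (∃ C : ℝ, ∀ n : ℕ,
      ‖((n : ℝ)⁻¹) • ∑ k ∈ Finset.range n,
          (Matrix.toEuclideanCLM (𝕜 := ℝ) (!![(-1 : ℝ), 2; 0, -1])) ^ k‖ ≤ C) ∧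
    ¬ (∃ C : ℝ, ∀ n : ℕ,
      ‖(Matrix.toEuclideanCLM (𝕜 := ℝ) (!![(-1 : ℝ), 2; 0, -1])) ^ n‖ ≤ C) := by
  set N := Matrix.toEuclideanCLM (𝕜 := ℝ) !![(0 : ℝ), 2; 0, 0]
  have hT : Matrix.toEuclideanCLM (𝕜 := ℝ) !![(-1 : ℝ), 2; 0, -1] = -1 + N := by
    rw [← map_one (Matrix.toEuclideanCLM (𝕜 := ℝ) (n := Fin 2)), ← map_neg, ← map_add]
    congr 1
    ext i j
    fin_cases i <;> fin_cases j <;> simp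
  have hN : N * N = 0 := by
    rw [← map_mul, ← map_zero (Matrix.toEuclideanCLM (𝕜 := ℝ) (n := Fin 2))]
    congr 1
    ext i j
    fin_cases i <;> fin_cases j <;> simp
  have hN0 : N ≠ 0 := by
    rw [Ne, map_eq_zero_iff (Matrix.toEuclideanCLM (𝕜 := ℝ) (n := Fin 2))
      (Matrix.toEuclideanCLM (𝕜 := ℝ) (n := Fin 2)).injective]
    intro h
    simpa using congrFun (congrFun h 0) 1
  rw [hT]
  exact ⟨isCesaroBounded_neg_one_add hN, not_isPowerBounded_neg_one_add hN hN0⟩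
end

section
/- Let G be a locally compact group that is not discrete, with left Haar measure λ. Then G contains a compact subset E which is nowhere dense and satisfies λ(E) > 0. -/
/-!
Symmetric compact neighbourhoods `V n` of `1` with `V (n + 1) * V (n + 1) ⊆ V n` and Haar
measures tending to `0` intersect in a compact null subgroup `H`, of which the `V n` form a
countable neighbourhood basis; working modulo `H` replaces first countability of `G`. Take a
compact set `K` of positive measure with `K * H = K`. Countably many points `D` meet every
translate `x • V n`, `x ∈ K`, and since each `d • H` is null, `D` lies in an open set `R` with
`R * H = R` and measure less than that of `K`. Then `E = K \ R` has positive measure, and its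
interior is right `H`-invariant: if it contained `x`, it would contain `x • H`, hence some
`x • V n`, which meets `D ⊆ R`.
-/

open MeasureTheory Set Topology
open scoped Pointwise ENNReal

section

variable {G : Type*} [Group G] [TopologicalSpace G] [IsTopologicalGroup G]

lemma exists_isCompact_nhds_one_inv_eq_mul_subset_measure_lt [LocallyCompactSpace G]
    {_ : MeasurableSpace G} (ν : Measure G) [ν.OuterRegular] [NullSingletonClass ν] {U : Set G}
    (hU : U ∈ 𝓝 1) {ε : ℝ≥0∞} (hε : ε ≠ 0) :
    ∃ V : Set G, IsCompact V ∧ IsClosed V ∧ V ∈ 𝓝 1 ∧ V⁻¹ = V ∧ V * V ⊆ U ∧ ν V < ε := by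
  obtain ⟨K, hKc, hK⟩ := exists_compact_mem_nhds (1 : G)
  have h1 : ν {1} < ε := by rw [measure_singleton]; exact pos_iff_ne_zero.2 hε
  obtain ⟨O, h1O, hO, hOε⟩ := Set.exists_isOpen_lt_of_lt _ _ h1
  obtain ⟨V, hV, hVc, hVinv, hVV⟩ := exists_closed_nhds_one_inv_eq_mul_subset
    (Filter.inter_mem (Filter.inter_mem hU hK) (hO.mem_nhds (h1O rfl)))
  have hVsub : V ⊆ U ∩ K ∩ O := (subset_mul_left V (mem_of_mem_nhds hV)).trans hVV
  exact ⟨V, hKc.of_isClosed_subset hVc (hVsub.trans (inter_subset_left.trans inter_subset_right)),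
    hVc, hV, hVinv, hVV.trans (inter_subset_left.trans inter_subset_left),
    (measure_mono (hVsub.trans inter_subset_right)).trans_lt hOε⟩

lemma exists_isCompact_null_subgroup_with_countable_basis [LocallyCompactSpace G]
    {_ : MeasurableSpace G} (ν : Measure G) [ν.OuterRegular] [NullSingletonClass ν] :
    ∃ (H : Subgroup G) (V : ℕ → Set G), IsCompact (H : Set G) ∧ ν H = 0 ∧
      (∀ n, V n ∈ 𝓝 1) ∧ ∀ O, IsOpen O → (H : Set G) ⊆ O → ∃ n, V n ⊆ O := by
  choose W hWc hWcl hW1 hWinv hWW hWν using fun (U : {U : Set G // U ∈ 𝓝 1}) (n : ℕ) =>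
    exists_isCompact_nhds_one_inv_eq_mul_subset_measure_lt ν U.2
      (ENNReal.inv_ne_zero.2 (ENNReal.natCast_ne_top n))
  let U : ℕ → {U : Set G // U ∈ 𝓝 1} :=
    fun n => Nat.rec ⟨univ, Filter.univ_mem⟩ (fun n Un => ⟨W Un n, hW1 Un n⟩) n
  let V : ℕ → Set G := fun n => W (U n) n
  have hV1 : ∀ n, V n ∈ 𝓝 1 := fun n => hW1 (U n) n
  have hVc : ∀ n, IsCompact (V n) := fun n => hWc (U n) n
  have hVcl : ∀ n, IsClosed (V n) := fun n => hWcl (U n) n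
  have hVinv : ∀ n, (V n)⁻¹ = V n := fun n => hWinv (U n) n
  have hVV : ∀ n, V (n + 1) * V (n + 1) ⊆ V n := fun n => hWW (U (n + 1)) (n + 1)
  have hVν : ∀ n, ν (V n) < (n : ℝ≥0∞)⁻¹ := fun n => hWν (U n) n
  have hVanti : Antitone V := antitone_nat_of_succ_le fun n =>
    (subset_mul_left _ (mem_of_mem_nhds (hV1 (n + 1)))).trans (hVV n)
  let H : Subgroup G :=
    { carrier := ⋂ n, V n
      one_mem' := mem_iInter.2 fun n => mem_of_mem_nhds (hV1 n)
      mul_mem' := fun hx hy => mem_iInter.2 fun n =>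
        hVV n (mul_mem_mul (mem_iInter.1 hx (n + 1)) (mem_iInter.1 hy (n + 1)))
      inv_mem' := fun hx => mem_iInter.2 fun n => by
        rw [← hVinv n]; exact inv_mem_inv.2 (mem_iInter.1 hx n) }
  refine ⟨H, V, (hVc 0).of_isClosed_subset (isClosed_iInter hVcl)
    (iInter_subset V 0), ?_, hV1, fun O hO hHO => ?_⟩
  · by_contra hH0
    obtain ⟨n, hn⟩ := ENNReal.exists_inv_nat_lt hH0
    exact ((measure_mono (iInter_subset V n)).trans_lt (hVν n)).not_gt hn
  · exact exists_subset_nhds_of_isCompact' hVanti.directed_ge hVc hVcl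
      fun x hx => hO.mem_nhds (hHO hx)

lemma IsCompact.exists_countable_inter_smul_nonempty {K : Set G} (hK : IsCompact K)
    {V : ℕ → Set G} (hV : ∀ n, V n ∈ 𝓝 1) :
    ∃ D : Set G, D.Countable ∧ ∀ x ∈ K, ∀ n, (D ∩ x • V n).Nonempty := by
  have hcover : ∀ n, ∃ t : Finset G, K ⊆ ⋃ y ∈ t, y • (V n)⁻¹ := fun n => by
    obtain ⟨t, -, ht⟩ := hK.elim_nhds_subcover (fun y => y • (V n)⁻¹) fun y _ => by
      simpa using smul_mem_nhds_smul y (inv_mem_nhds_one G (hV n))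
    exact ⟨t, ht⟩
  choose t ht using hcover
  refine ⟨⋃ n, (t n : Set G), countable_iUnion fun n => (t n).countable_toSet,
    fun x hx n => ?_⟩
  obtain ⟨y, hy, hxy⟩ := mem_iUnion₂.1 (ht n hx)
  refine ⟨y, mem_iUnion.2 ⟨n, hy⟩, ?_⟩
  rw [mem_smul_set_iff_inv_smul_mem] at hxy ⊢
  simpa [smul_eq_mul] using hxy

lemma exists_isOpen_mem_mul_subgroup_subset_measure_lt {_ : MeasurableSpace G} (ν : Measure G)
    [ν.IsMulLeftInvariant] [ν.OuterRegular] {H : Subgroup G} (hHc : IsCompact (H : Set G))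
    (hH0 : ν H = 0) (f : G) {δ : ℝ≥0∞} (hδ : δ ≠ 0) :
    ∃ W : Set G, IsOpen W ∧ f ∈ W ∧ W * H ⊆ W ∧ ν W < δ := by
  have hfH : ν (f • (H : Set G)) < δ := by rw [measure_smul, hH0]; exact pos_iff_ne_zero.2 hδ
  obtain ⟨O, hHO, hO, hOδ⟩ := Set.exists_isOpen_lt_of_lt _ _ hfH
  obtain ⟨U, hU, hUH⟩ := compact_open_separated_mul_left hHc (hO.smul f⁻¹)
    (smul_set_subset_iff_subset_inv_smul_set.1 hHO)
  refine ⟨f • (interior U * H), (isOpen_interior.mul_right).smul f, ?_, ?_, ?_⟩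
  · refine ⟨1, ?_, mul_one f⟩
    simpa using mul_mem_mul (mem_interior_iff_mem_nhds.2 hU) H.one_mem
  · rw [smul_mul_assoc, mul_assoc, coe_mul_coe]
  · refine (measure_mono ?_).trans_lt hOδ
    exact smul_set_subset_iff_subset_inv_smul_set.2
      ((mul_subset_mul_right interior_subset).trans hUH)

lemma exists_isOpen_superset_mul_subgroup_subset_measure_lt {_ : MeasurableSpace G}
    (ν : Measure G) [ν.IsMulLeftInvariant] [ν.OuterRegular] {H : Subgroup G}
    (hHc : IsCompact (H : Set G)) (hH0 : ν H = 0) {D : Set G} (hD : D.Countable) {ε : ℝ≥0∞}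
    (hε : ε ≠ 0) :
    ∃ R : Set G, IsOpen R ∧ D ⊆ R ∧ R * H ⊆ R ∧ ν R < ε := by
  have := hD.to_subtype
  obtain ⟨δ, hδ, hδε⟩ := ENNReal.exists_pos_sum_of_countable hε D
  choose W hWo hfW hWH hWδ using fun f : D =>
    exists_isOpen_mem_mul_subgroup_subset_measure_lt ν hHc hH0 f
      (ENNReal.coe_ne_zero.2 (hδ f).ne')
  refine ⟨⋃ f, W f, isOpen_iUnion hWo, fun f hf => mem_iUnion.2 ⟨⟨f, hf⟩, hfW _⟩, ?_, ?_⟩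
  · rw [iUnion_mul]
    exact iUnion_mono hWH
  · calc ν (⋃ f, W f) ≤ ∑' f, ν (W f) := measure_iUnion_le W
      _ ≤ ∑' f, (δ f : ℝ≥0∞) := ENNReal.tsum_le_tsum fun f => (hWδ f).le
      _ < ε := hδε

lemma interior_eq_empty_of_mul_subgroup_subset {H : Subgroup G} {V : ℕ → Set G}
    (hV : ∀ O, IsOpen O → (H : Set G) ⊆ O → ∃ n, V n ⊆ O) {E D : Set G} (hEH : E * H ⊆ E)
    (hDE : Disjoint D E) (hD : ∀ x ∈ E, ∀ n, (D ∩ x • V n).Nonempty) : interior E = ∅ := by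
  refine eq_empty_of_forall_notMem fun x hx => ?_
  have hintH : interior E * H ⊆ interior E :=
    interior_maximal ((mul_subset_mul_right interior_subset).trans hEH) isOpen_interior.mul_right
  have hxH : x • (H : Set G) ⊆ interior E :=
    smul_set_subset_iff.2 fun h hh => hintH (mul_mem_mul hx hh)
  obtain ⟨n, hn⟩ := hV _ (isOpen_interior.smul x⁻¹) (smul_set_subset_iff_subset_inv_smul_set.1 hxH)
  obtain ⟨d, hdD, hdx⟩ := hD x (interior_subset hx) n
  exact hDE.ne_of_mem hdD
    (interior_subset (smul_set_subset_iff_subset_inv_smul_set.2 hn hdx)) rfl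

lemma exists_isCompact_isNowhereDense_subset_measure_pos [T2Space G] {_ : MeasurableSpace G}
    (ν : Measure G) [ν.IsMulLeftInvariant] [ν.OuterRegular] {H : Subgroup G}
    (hHc : IsCompact (H : Set G)) (hH0 : ν H = 0) {V : ℕ → Set G} (hV1 : ∀ n, V n ∈ 𝓝 1)
    (hV : ∀ O, IsOpen O → (H : Set G) ⊆ O → ∃ n, V n ⊆ O) {K : Set G} (hK : IsCompact K)
    (hKH : K * H ⊆ K) (hK0 : ν K ≠ 0) :
    ∃ E ⊆ K, IsCompact E ∧ IsNowhereDense E ∧ 0 < ν E := by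
  obtain ⟨D, hDc, hD⟩ := hK.exists_countable_inter_smul_nonempty hV1
  obtain ⟨R, hRo, hDR, hRH, hRK⟩ :=
    exists_isOpen_superset_mul_subgroup_subset_measure_lt ν hHc hH0 hDc hK0
  have hEH : (K \ R) * H ⊆ K \ R := by
    rintro _ ⟨x, ⟨hxK, hxR⟩, h, hh, rfl⟩
    refine ⟨hKH (mul_mem_mul hxK hh), fun hxhR => hxR ?_⟩
    simpa using hRH (mul_mem_mul hxhR (H.inv_mem hh))
  refine ⟨K \ R, sdiff_subset, hK.diff hRo, ?_, pos_iff_ne_zero.2 fun hE0 => hRK.not_ge ?_⟩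
  · exact (hK.diff hRo).isClosed.isNowhereDense_iff.2 <| interior_eq_empty_of_mul_subgroup_subset
      hV hEH (disjoint_sdiff_right.mono_left hDR) fun x hx => hD x hx.1
  · calc ν K ≤ ν (K \ R ∪ R) := measure_mono (subset_sdiff_union K R)
      _ ≤ ν (K \ R) + ν R := measure_union_le _ _
      _ = ν R := by rw [hE0, zero_add]

theorem exists_isCompact_isNowhereDense_measure_pos [LocallyCompactSpace G] [T2Space G]
    {_ : MeasurableSpace G} (ν : Measure G) [ν.IsMulLeftInvariant] [ν.OuterRegular]
    [NullSingletonClass ν] [ν.IsOpenPosMeasure] :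
    ∃ E : Set G, IsCompact E ∧ IsNowhereDense E ∧ 0 < ν E := by
  obtain ⟨H, V, hHc, hH0, hV1, hV⟩ := exists_isCompact_null_subgroup_with_countable_basis ν
  obtain ⟨C, hCc, hC1⟩ := exists_compact_mem_nhds (1 : G)
  have hCH : C ⊆ C * H := subset_mul_left C H.one_mem
  obtain ⟨E, -, hE⟩ := exists_isCompact_isNowhereDense_subset_measure_pos ν hHc hH0 hV1 hV
    (hCc.mul hHc) (by rw [mul_assoc, coe_mul_coe])
    (ν.measure_pos_of_mem_nhds (Filter.mem_of_superset hC1 hCH)).ne'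
  exact ⟨E, hE⟩

end

/-- A non-discrete locally compact group possesses a compact nowhere dense subset of
positive Haar measure. -/
theorem stmt_4 {G : Type*} [Group G] [TopologicalSpace G] [IsTopologicalGroup G]
    [LocallyCompactSpace G] [T2Space G] [MeasurableSpace G] [BorelSpace G]
    (μ : Measure G) [μ.IsHaarMeasure] (h : ¬ DiscreteTopology G) :
    ∃ E : Set G, IsCompact E ∧ IsNowhereDense E ∧ 0 < μ E := by
  have : (𝓝[≠] (1 : G)).NeBot := Filter.neBot_iff.2 fun h1 =>
    h (discreteTopology_of_isOpen_singleton_one ((isOpen_singleton_iff_punctured_nhds 1).2 h1))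
  obtain ⟨E, hEc, hEnd, hE⟩ :=
    exists_isCompact_isNowhereDense_measure_pos (Measure.haar : Measure G)
  refine ⟨E, hEc, hEnd, ?_⟩
  -- `μ` need not be outer regular; Haar measures agree up to a positive factor on compact sets.
  rw [Measure.measure_isMulInvariant_eq_smul_of_isCompact_closure μ Measure.haar hEc.closure,
    ENNReal.smul_def, smul_eq_mul]
  exact ENNReal.mul_pos (by exact_mod_cast (Measure.haarScalarFactor_pos_of_isHaarMeasure μ _).ne')
    hE.ne'
end

section
/- Let A be a unital complex Banach algebra and let u ∈ A be power bounded. Then the element v = (1 + u)/2 is power bounded and satisfies lim_{n→∞} ‖v^{n+1} − vⁿ‖ = 0. -/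
/-!
Expanding binomially, `vⁿ = 2⁻ⁿ ∑ₖ C(n,k) uᵏ`, so `‖vⁿ‖ ≤ sup ‖uᵏ‖`, and
`v^(n+1) - vⁿ = 2^-(n+1) (1+u)ⁿ (u-1) = 2^-(n+1) ∑ₖ (C(n,k-1) - C(n,k)) uᵏ`.
The coefficients `C(n,k)` increase up to `k = n/2` and decrease afterwards, so the absolute
values of their differences telescope to `2 C(n,n/2)`, and `C(n,n/2) / 2ⁿ = O(1/√n)`.
-/

open Filter Finset

theorem Finset.sum_range_abs_sub_of_unimodal {α : Type*} [AddCommGroup α] [LinearOrder α]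
    [IsOrderedAddMonoid α] {f : ℕ → α} {p N : ℕ} (hpN : p ≤ N)
    (hmono : ∀ k < p, f k ≤ f (k + 1)) (hanti : ∀ k, p ≤ k → f (k + 1) ≤ f k) :
    ∑ k ∈ range N, |f (k + 1) - f k| = f p - f 0 + (f p - f N) := by
  rw [← sum_range_add_sum_Ico _ hpN]
  congr 1
  · rw [← sum_range_sub]
    refine sum_congr rfl fun k hk => abs_of_nonneg ?_
    exact sub_nonneg.mpr (hmono k (mem_range.mp hk))
  · rw [← neg_sub, ← sum_Ico_sub _ hpN, ← sum_neg_distrib]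
    refine sum_congr rfl fun k hk => abs_of_nonpos ?_
    exact sub_nonpos.mpr (hanti k (mem_Ico.mp hk).1)

namespace Nat

theorem choose_succ_le_of_half_le {n k : ℕ} (hk : n / 2 ≤ k) :
    n.choose (k + 1) ≤ n.choose k := by
  refine Nat.le_of_mul_le_mul_right ?_ k.succ_pos
  rw [choose_succ_right_eq]
  exact Nat.mul_le_mul_left _ (by omega)

def choosePred (n : ℕ) : ℕ → ℕ
  | 0 => 0
  | k + 1 => n.choose k

theorem sum_range_abs_sub_choosePred (n : ℕ) :
    ∑ k ∈ range (n + 2), |(choosePred n (k + 1) : ℤ) - choosePred n k| =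
      2 * n.choose (n / 2) := by
  have hmono : ∀ k < n / 2 + 1, (choosePred n k : ℤ) ≤ choosePred n (k + 1) := by
    rintro (_ | k) hk
    · exact Int.natCast_nonneg _
    · exact_mod_cast choose_le_succ_of_lt_half_left (by omega)
  have hanti : ∀ k, n / 2 + 1 ≤ k → (choosePred n (k + 1) : ℤ) ≤ choosePred n k := by
    rintro (_ | k) hk
    · omega
    · exact_mod_cast choose_succ_le_of_half_le (by omega)
  rw [sum_range_abs_sub_of_unimodal (by omega) hmono hanti]
  simp only [choosePred, CharP.cast_eq_zero, sub_zero, choose_succ_self]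
  ring

theorem centralBinom_sq_mul_succ_le (n : ℕ) : centralBinom n ^ 2 * (n + 1) ≤ 16 ^ n := by
  induction n with
  | zero => simp
  | succ n ih =>
    refine Nat.le_of_mul_le_mul_left ?_ (pow_pos n.succ_pos 3)
    have hpoly : (2 * (2 * n + 1)) ^ 2 * (n + 2) ≤ 16 * (n + 1) ^ 3 := by nlinarith
    calc (n + 1) ^ 3 * (centralBinom (n + 1) ^ 2 * (n + 1 + 1))
        = ((n + 1) * centralBinom (n + 1)) ^ 2 * ((n + 2) * (n + 1)) := by ring
      _ = (2 * (2 * n + 1)) ^ 2 * (n + 2) * (centralBinom n ^ 2 * (n + 1)) := by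
          rw [succ_mul_centralBinom_succ]; ring
      _ ≤ 16 * (n + 1) ^ 3 * 16 ^ n := Nat.mul_le_mul hpoly ih
      _ = (n + 1) ^ 3 * 16 ^ (n + 1) := by ring

theorem choose_half_sq_mul_succ_le (n : ℕ) : n.choose (n / 2) ^ 2 * (n + 1) ≤ 2 * 4 ^ n := by
  obtain ⟨m, rfl | rfl⟩ := n.even_or_odd'
  · have h := centralBinom_sq_mul_succ_le m
    rw [centralBinom_eq_two_mul_choose] at h
    rw [show 2 * m / 2 = m by omega, pow_mul]
    calc (2 * m).choose m ^ 2 * (2 * m + 1) ≤ 2 * ((2 * m).choose m ^ 2 * (m + 1)) := by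
          ring_nf; omega
      _ ≤ 2 * (4 ^ 2) ^ m := by simpa using h
  · have h := centralBinom_sq_mul_succ_le (m + 1)
    rw [centralBinom_eq_two_mul_choose, show 2 * (m + 1) = 2 * m + 1 + 1 by ring,
      choose_succ_succ, choose_symm_half] at h
    rw [show (2 * m + 1) / 2 = m by omega, show 4 ^ (2 * m + 1) = 4 * 16 ^ m by
      rw [pow_succ, pow_mul]; ring]
    rw [pow_succ 16 m] at h
    generalize (2 * m + 1).choose m = c at h ⊢
    nlinarith

end Nat

theorem tendsto_choose_half_div_two_pow :
    Tendsto (fun n : ℕ => (n.choose (n / 2) : ℝ) / 2 ^ n) atTop (nhds 0) := by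
  have hsq : Tendsto (fun n : ℕ => ((n.choose (n / 2) : ℝ) / 2 ^ n) ^ 2) atTop (nhds 0) := by
    refine squeeze_zero (fun n => by positivity) (fun n => ?_)
      ((tendsto_const_div_atTop_nhds_zero_nat 2).comp (tendsto_add_atTop_nat 1))
    have h := Nat.choose_half_sq_mul_succ_le n
    rw [show 4 ^ n = (2 ^ n) ^ 2 by rw [← pow_mul, mul_comm, pow_mul]; rfl] at h
    rw [Function.comp_apply, div_pow, div_le_div_iff₀ (by positivity) (by positivity)]
    exact_mod_cast h
  have h := hsq.sqrt
  rw [Real.sqrt_zero] at h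
  exact h.congr fun n => Real.sqrt_sq (by positivity)

section

variable {R : Type*} [Ring R]

theorem one_add_pow_eq_sum (u : R) (n : ℕ) :
    (1 + u) ^ n = ∑ k ∈ range (n + 1), n.choose k • u ^ k := by
  rw [add_comm, (Commute.one_right u).add_pow]
  simp [nsmul_eq_mul, Nat.cast_comm]

theorem one_add_pow_mul_sub_one_eq_sum (u : R) (n : ℕ) :
    (1 + u) ^ n * (u - 1) =
      ∑ k ∈ range (n + 2),
        ((Nat.choosePred n k : ℤ) - Nat.choosePred n (k + 1)) • u ^ k := by
  have hshift : ∑ k ∈ range (n + 2), Nat.choosePred n k • u ^ k = (1 + u) ^ n * u := by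
    rw [sum_range_succ']
    simp [Nat.choosePred, one_add_pow_eq_sum, sum_mul, pow_succ, mul_assoc]
  have hdiag : ∑ k ∈ range (n + 2), Nat.choosePred n (k + 1) • u ^ k = (1 + u) ^ n := by
    rw [sum_range_succ]
    simp [Nat.choosePred, one_add_pow_eq_sum]
  rw [mul_sub, mul_one, ← hshift, ← hdiag, ← sum_sub_distrib]
  exact sum_congr rfl fun k _ => by rw [sub_smul, natCast_zsmul, natCast_zsmul]

end

section

variable {A : Type*} [SeminormedRing A] {u : A} {C : ℝ}

theorem norm_one_add_pow_le (hC : ∀ k, ‖u ^ k‖ ≤ C) (n : ℕ) :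
    ‖(1 + u) ^ n‖ ≤ 2 ^ n * C := by
  rw [one_add_pow_eq_sum]
  calc ‖∑ k ∈ range (n + 1), n.choose k • u ^ k‖
      ≤ ∑ k ∈ range (n + 1), n.choose k * C := by
        refine (norm_sum_le _ _).trans (sum_le_sum fun k _ => ?_)
        exact norm_nsmul_le.trans (by gcongr; exact hC k)
    _ = 2 ^ n * C := by
        rw [← sum_mul, ← Nat.cast_sum, Nat.sum_range_choose, Nat.cast_pow, Nat.cast_ofNat]

theorem norm_one_add_pow_mul_sub_one_le (hC : ∀ k, ‖u ^ k‖ ≤ C) (n : ℕ) :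
    ‖(1 + u) ^ n * (u - 1)‖ ≤ 2 * n.choose (n / 2) * C := by
  rw [one_add_pow_mul_sub_one_eq_sum]
  calc _ ≤ ∑ k ∈ range (n + 2),
        |(Nat.choosePred n (k + 1) : ℝ) - Nat.choosePred n k| * C := by
        refine (norm_sum_le _ _).trans (sum_le_sum fun k _ => ?_)
        refine (norm_zsmul_le _ _).trans ?_
        rw [Int.norm_eq_abs, abs_sub_comm]
        push_cast
        gcongr
        exact hC k
    _ = 2 * n.choose (n / 2) * C := by
        have h : ∑ k ∈ range (n + 2), |(Nat.choosePred n (k + 1) : ℝ) - Nat.choosePred n k|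
            = 2 * n.choose (n / 2) := by exact_mod_cast Nat.sum_range_abs_sub_choosePred n
        rw [← sum_mul, h]

end

theorem stmt_9_general {A : Type*} [NormedRing A] [NormedAlgebra ℂ A]
    (u : A) (h : ∃ C : ℝ, ∀ n : ℕ, ‖u ^ n‖ ≤ C) :
    (∃ C : ℝ, ∀ n : ℕ, ‖(((2 : ℂ)⁻¹) • (1 + u)) ^ n‖ ≤ C) ∧
    Tendsto (fun n : ℕ =>
        ‖(((2 : ℂ)⁻¹) • (1 + u)) ^ (n + 1) - (((2 : ℂ)⁻¹) • (1 + u)) ^ n‖)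
      atTop (nhds 0) := by
  obtain ⟨C, hC⟩ := h
  have hnorm : ∀ n : ℕ, ‖(2 : ℂ)⁻¹ ^ n‖ = (2 ^ n)⁻¹ := by simp
  have hdiff : ∀ n : ℕ,
      ((2 : ℂ)⁻¹ • (1 + u)) ^ (n + 1) - ((2 : ℂ)⁻¹ • (1 + u)) ^ n
      = (2 : ℂ)⁻¹ ^ (n + 1) • ((1 + u) ^ n * (u - 1)) := fun n => by
    rw [smul_pow, smul_pow, pow_succ, pow_succ, mul_add, mul_sub, mul_one]
    module
  refine ⟨⟨C, fun n => ?_⟩, ?_⟩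
  · calc ‖((2 : ℂ)⁻¹ • (1 + u)) ^ n‖ = (2 ^ n)⁻¹ * ‖(1 + u) ^ n‖ := by
          rw [smul_pow, norm_smul, hnorm]
      _ ≤ (2 ^ n)⁻¹ * (2 ^ n * C) := by gcongr; exact norm_one_add_pow_le hC n
      _ = C := by field_simp
  · refine squeeze_zero (fun n => norm_nonneg _) (fun n => ?_)
      (by simpa using (tendsto_choose_half_div_two_pow.const_mul C))
    calc _ = (2 ^ (n + 1))⁻¹ * ‖(1 + u) ^ n * (u - 1)‖ := by rw [hdiff, norm_smul, hnorm]
      _ ≤ (2 ^ (n + 1))⁻¹ * (2 * n.choose (n / 2) * C) := by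
          gcongr; exact norm_one_add_pow_mul_sub_one_le hC n
      _ = C * (n.choose (n / 2) / 2 ^ n) := by field_simp; ring

/-- If `u` is a power bounded element of a unital complex Banach algebra, then
`v = (1 + u)/2` is power bounded and `‖v^(n+1) - v^n‖ → 0`. -/
theorem stmt_9 {A : Type*} [NormedRing A] [NormedAlgebra ℂ A] [CompleteSpace A]
    (u : A) (h : ∃ C : ℝ, ∀ n : ℕ, ‖u ^ n‖ ≤ C) :
    (∃ C : ℝ, ∀ n : ℕ, ‖(((2 : ℂ)⁻¹) • (1 + u)) ^ n‖ ≤ C) ∧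
    Tendsto (fun n : ℕ =>
        ‖(((2 : ℂ)⁻¹) • (1 + u)) ^ (n + 1) - (((2 : ℂ)⁻¹) • (1 + u)) ^ n‖)
      atTop (nhds 0) :=
  stmt_9_general u h
end

section
/- Let A be a commutative complex Banach function algebra on a set X, closed under complex conjugation, such that ‖ū‖ = ‖u‖ for all u ∈ A, and such that |u| ∈ A whenever u ∈ A. If u ∈ A is power bounded, then |u| is power bounded. -/
/-!
Since `|u|² = u ū` pointwise and `ūⁿ` is the conjugate of `uⁿ`, the even powers satisfy
`‖|u|^(2n)‖ = ‖uⁿ ūⁿ‖ ≤ ‖uⁿ‖²`, which is bounded; an odd power costs one more factor `‖|u|‖`.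
-/

section NormedRing

variable {R : Type*} [SeminormedRing R]

theorem exists_norm_pow_le_of_norm_pow_two_mul_le (a : R) {M : ℝ}
    (h : ∀ n : ℕ, ‖a ^ (2 * n)‖ ≤ M) : ∃ C : ℝ, ∀ n : ℕ, ‖a ^ n‖ ≤ C := by
  have hM : 0 ≤ M := (norm_nonneg _).trans (h 0)
  refine ⟨M * max 1 ‖a‖, fun n => ?_⟩
  obtain ⟨k, rfl | rfl⟩ := Nat.even_or_odd' n
  · calc ‖a ^ (2 * k)‖ ≤ M := h k
      _ ≤ M * max 1 ‖a‖ := le_mul_of_one_le_right hM (le_max_left _ _)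
  · calc ‖a ^ (2 * k + 1)‖ ≤ ‖a ^ (2 * k)‖ * ‖a‖ := by rw [pow_succ]; exact norm_mul_le _ _
      _ ≤ M * max 1 ‖a‖ := mul_le_mul (h k) (le_max_right _ _) (norm_nonneg _) hM

end NormedRing

section FunctionAlgebra

variable {X A F : Type*} [CommRing A] [FunLike F A (X → ℂ)] [RingHomClass F A (X → ℂ)]
  {ι : F} (hι : Function.Injective ι)
  {conj : A → A} (hconj : ∀ a : A, ι (conj a) = fun x => (starRingEnd ℂ) (ι a x))
include hι hconj

theorem conj_pow_eq (u : A) (n : ℕ) : conj u ^ n = conj (u ^ n) :=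
  hι <| by
    rw [map_pow, hconj, hconj, map_pow]
    funext x
    simp only [Pi.pow_apply, map_pow]

theorem abs_sq_eq_mul_conj {abs : A → A} (habs : ∀ a : A, ι (abs a) = fun x => (‖ι a x‖ : ℂ))
    (u : A) : abs u ^ 2 = u * conj u :=
  hι <| by
    rw [map_pow, map_mul, habs, hconj]
    funext x
    simp only [Pi.pow_apply, Pi.mul_apply]
    rw [← Complex.ofReal_pow, Complex.sq_norm, Complex.mul_conj]

end FunctionAlgebra

theorem stmt_10_general {X A : Type*} [NormedCommRing A] [NormedAlgebra ℂ A]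
    (ι : A →ₐ[ℂ] (X → ℂ)) (hι : Function.Injective ι)
    (conj : A → A) (hconj : ∀ a : A, ι (conj a) = fun x => (starRingEnd ℂ) (ι a x))
    (hconj_norm : ∀ a : A, ‖conj a‖ = ‖a‖)
    (abs : A → A) (habs : ∀ a : A, ι (abs a) = fun x => (‖ι a x‖ : ℂ))
    (u : A) (hu : ∃ C : ℝ, ∀ n : ℕ, ‖u ^ n‖ ≤ C) :
    ∃ C : ℝ, ∀ n : ℕ, ‖(abs u) ^ n‖ ≤ C := by
  obtain ⟨C, hC⟩ := hu
  have hC0 : 0 ≤ C := (norm_nonneg _).trans (hC 0)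
  refine exists_norm_pow_le_of_norm_pow_two_mul_le (abs u) (M := C * C) fun n => ?_
  calc ‖abs u ^ (2 * n)‖ = ‖u ^ n * conj (u ^ n)‖ := by
        rw [pow_mul, abs_sq_eq_mul_conj hι hconj habs, mul_pow, conj_pow_eq hι hconj]
    _ ≤ ‖u ^ n‖ * ‖conj (u ^ n)‖ := norm_mul_le _ _
    _ ≤ C * C := by
        rw [hconj_norm]
        exact mul_le_mul (hC n) (hC n) (norm_nonneg _) hC0

/-- Let `A` be a commutative complex Banach algebra of functions on a set `X`
(realized via an injective algebra homomorphism `ι : A →ₐ[ℂ] (X → ℂ)`), closed under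
complex conjugation with `‖ū‖ = ‖u‖`, and closed under pointwise absolute value.
If `u ∈ A` is power bounded, then so is `|u|`. -/
theorem stmt_10 {X A : Type*} [NormedCommRing A] [NormedAlgebra ℂ A] [CompleteSpace A]
    (ι : A →ₐ[ℂ] (X → ℂ)) (hι : Function.Injective ι)
    (conj : A → A) (hconj : ∀ a : A, ι (conj a) = fun x => (starRingEnd ℂ) (ι a x))
    (hconj_norm : ∀ a : A, ‖conj a‖ = ‖a‖)
    (abs : A → A) (habs : ∀ a : A, ι (abs a) = fun x => (‖ι a x‖ : ℂ))
    (u : A) (hu : ∃ C : ℝ, ∀ n : ℕ, ‖u ^ n‖ ≤ C) :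
    ∃ C : ℝ, ∀ n : ℕ, ‖(abs u) ^ n‖ ≤ C :=
  stmt_10_general ι hι conj hconj hconj_norm abs habs u hu
end
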